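/- arXiv:math/9806130 — 2 statements merged into one kernel-verified Lean document; each statement's English description precedes it below -/
import Mathlib

section
/- Let M be an A-module algebra over a weak *-Hopf algebra A, N = M^A its fixed point algebra, and suppose there is a dual pair (l, λ) of left integrals with Σ 1₍₁₎·⟨λ, 1₍₂₎⟩ = 1_A (λ normalized). Write N'∩M := {x ∈ M : x·n = n·x for all n ∈ N}. Then: (i) a▷x ∈ N'∩M for every x ∈ N'∩M and a ∈ A; (ii) in the crossed product M⋊A, the centralizer of {n⋊1 : n ∈ N} equals the image of (N'∩M)⊗A, i.e. {y ∈ M⋊A : y·(n⋊1) = (n⋊1)·y for all n ∈ N} = span{x⋊a : x ∈ N'∩M, a ∈ A}; (iii) in particular N'∩M = A▷1_M if and only if the centralizer of {n⋊1 : n ∈ N} in M⋊A equals {1_M⋊a : a ∈ A}. -/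
open scoped TensorProduct

noncomputable section

/-- The componentwise star operation on a tensor product of star algebras,
as an additive map (it is conjugate-linear, hence not a `LinearMap`). -/
def tensorStar (A B : Type) [Ring A] [Algebra ℂ A] [StarRing A] [StarModule ℂ A]
    [Ring B] [Algebra ℂ B] [StarRing B] [StarModule ℂ B] :
    A ⊗[ℂ] B →+ A ⊗[ℂ] B :=
  TensorProduct.liftAddHom
    (AddMonoidHom.mk'
      (fun a => AddMonoidHom.mk' (fun b => star a ⊗ₜ[ℂ] star b)
        (fun x y => by
          show star a ⊗ₜ[ℂ] star (x + y) = star a ⊗ₜ[ℂ] star x + star a ⊗ₜ[ℂ] star y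
          rw [star_add, TensorProduct.tmul_add]))
      (fun x y => by
        ext b
        show star (x + y) ⊗ₜ[ℂ] star b = star x ⊗ₜ[ℂ] star b + star y ⊗ₜ[ℂ] star b
        rw [star_add, TensorProduct.add_tmul]))
    (fun r a b => by
      show star (r • a) ⊗ₜ[ℂ] star b = star a ⊗ₜ[ℂ] star (r • b)
      rw [star_smul, star_smul, TensorProduct.smul_tmul])

/-- A finite dimensional weak `*`-Hopf algebra over `ℂ` (axioms of [BNS]),
together with the derived properties of the antipode (which follow from the
axioms and are included as fields for convenience). -/
structure WeakHopfAlgebra (A : Type) [Ring A] [Algebra ℂ A] [StarRing A] [StarModule ℂ A] where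
  Δ : A →ₗ[ℂ] A ⊗[ℂ] A
  ε : A →ₗ[ℂ] ℂ
  S : A →ₗ[ℂ] A
  Sinv : A →ₗ[ℂ] A
  finite : FiniteDimensional ℂ A
  Δ_mul : ∀ x y : A, Δ (x * y) = Δ x * Δ y
  Δ_star : ∀ x : A, Δ (star x) = tensorStar A A (Δ x)
  coassoc : ∀ x : A,
    (TensorProduct.assoc ℂ A A A) ((TensorProduct.map Δ (LinearMap.id : A →ₗ[ℂ] A)) (Δ x))
      = (TensorProduct.map (LinearMap.id : A →ₗ[ℂ] A) Δ) (Δ x)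
  counit_left : ∀ x : A,
    (TensorProduct.lid ℂ A) ((TensorProduct.map ε (LinearMap.id : A →ₗ[ℂ] A)) (Δ x)) = x
  counit_right : ∀ x : A,
    (TensorProduct.rid ℂ A) ((TensorProduct.map (LinearMap.id : A →ₗ[ℂ] A) ε) (Δ x)) = x
  unit_weak :
    (Δ 1 ⊗ₜ[ℂ] (1 : A)) * ((TensorProduct.assoc ℂ A A A).symm ((1 : A) ⊗ₜ[ℂ] Δ 1))
      = (TensorProduct.map Δ (LinearMap.id : A →ₗ[ℂ] A)) (Δ 1)
  unit_weak' :
    ((TensorProduct.assoc ℂ A A A).symm ((1 : A) ⊗ₜ[ℂ] Δ 1)) * (Δ 1 ⊗ₜ[ℂ] (1 : A))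
      = (TensorProduct.map Δ (LinearMap.id : A →ₗ[ℂ] A)) (Δ 1)
  counit_weak : ∀ x y z : A,
    ε (x * y * z) = (TensorProduct.lid ℂ ℂ)
      ((TensorProduct.map (ε ∘ₗ LinearMap.mulLeft ℂ x) (ε ∘ₗ LinearMap.mulRight ℂ z)) (Δ y))
  counit_weak' : ∀ x y z : A,
    ε (x * y * z) = (TensorProduct.lid ℂ ℂ)
      ((TensorProduct.map (ε ∘ₗ LinearMap.mulRight ℂ z) (ε ∘ₗ LinearMap.mulLeft ℂ x)) (Δ y))
  antipode_left : ∀ x : A,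
    LinearMap.mul' ℂ A ((TensorProduct.map S (LinearMap.id : A →ₗ[ℂ] A)) (Δ x))
      = (TensorProduct.rid ℂ A)
          ((TensorProduct.map (LinearMap.id : A →ₗ[ℂ] A) (ε ∘ₗ LinearMap.mulLeft ℂ x)) (Δ 1))
  antipode_right : ∀ x : A,
    LinearMap.mul' ℂ A ((TensorProduct.map (LinearMap.id : A →ₗ[ℂ] A) S) (Δ x))
      = (TensorProduct.lid ℂ A)
          ((TensorProduct.map (ε ∘ₗ LinearMap.mulRight ℂ x) (LinearMap.id : A →ₗ[ℂ] A)) (Δ 1))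
  antipode_mid : ∀ x : A,
    LinearMap.mul' ℂ A
      ((TensorProduct.map (LinearMap.mul' ℂ A ∘ₗ TensorProduct.map S (LinearMap.id : A →ₗ[ℂ] A)) S)
        ((TensorProduct.map Δ (LinearMap.id : A →ₗ[ℂ] A)) (Δ x))) = S x
  S_Sinv : ∀ x : A, S (Sinv x) = x
  Sinv_S : ∀ x : A, Sinv (S x) = x
  S_antimul : ∀ x y : A, S (x * y) = S y * S x
  S_anticomul : ∀ x : A, Δ (S x) = (TensorProduct.comm ℂ A A) ((TensorProduct.map S S) (Δ x))
  S_star : ∀ x : A, star (S (star x)) = Sinv x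

/-- The set of elements commuting with everything. -/
def centerSet (R : Type) [Mul R] : Set R := {z | ∀ r : R, z * r = r * z}

namespace WeakHopfAlgebra

variable {A : Type} [Ring A] [Algebra ℂ A] [StarRing A] [StarModule ℂ A]

/-- `Σ x₍₁₎ · S(x₍₂₎)`. -/
def swIdS (W : WeakHopfAlgebra A) (x : A) : A :=
  LinearMap.mul' ℂ A ((TensorProduct.map (LinearMap.id : A →ₗ[ℂ] A) W.S) (W.Δ x))

/-- `Σ S(x₍₁₎) · x₍₂₎`. -/
def swSId (W : WeakHopfAlgebra A) (x : A) : A :=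
  LinearMap.mul' ℂ A ((TensorProduct.map W.S (LinearMap.id : A →ₗ[ℂ] A)) (W.Δ x))

/-- `Σ x₍₂₎ · S⁻¹(x₍₁₎)`. -/
def swIdSinv (W : WeakHopfAlgebra A) (x : A) : A :=
  LinearMap.mul' ℂ A
    ((TensorProduct.map (LinearMap.id : A →ₗ[ℂ] A) W.Sinv) ((TensorProduct.comm ℂ A A) (W.Δ x)))

/-- `Σ S⁻¹(x₍₂₎) · x₍₁₎`. -/
def swSinvId (W : WeakHopfAlgebra A) (x : A) : A :=
  LinearMap.mul' ℂ A
    ((TensorProduct.map W.Sinv (LinearMap.id : A →ₗ[ℂ] A)) ((TensorProduct.comm ℂ A A) (W.Δ x)))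

/-- The left subalgebra `A_L = {(φ ⊗ id)(Δ 1) : φ ∈ A*}`. -/
def AL (W : WeakHopfAlgebra A) : Set A :=
  {a | ∃ φ : A →ₗ[ℂ] ℂ,
    a = (TensorProduct.lid ℂ A) ((TensorProduct.map φ (LinearMap.id : A →ₗ[ℂ] A)) (W.Δ 1))}

/-- The right subalgebra `A_R = {(id ⊗ φ)(Δ 1) : φ ∈ A*}`. -/
def AR (W : WeakHopfAlgebra A) : Set A :=
  {a | ∃ φ : A →ₗ[ℂ] ℂ,
    a = (TensorProduct.rid ℂ A) ((TensorProduct.map (LinearMap.id : A →ₗ[ℂ] A) φ) (W.Δ 1))}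

/-- A left integral: `a · l = Σ a₍₁₎ S(a₍₂₎) · l` for all `a`. -/
def IsLeftIntegral (W : WeakHopfAlgebra A) (l : A) : Prop := ∀ a : A, a * l = W.swIdS a * l

/-- A right integral: `r · a = r · Σ S(a₍₁₎) a₍₂₎` for all `a`. -/
def IsRightIntegral (W : WeakHopfAlgebra A) (r : A) : Prop := ∀ a : A, r * a = r * W.swSId a

/-- A normalized Haar integral. -/
def IsHaar (W : WeakHopfAlgebra A) (h : A) : Prop :=
  W.IsLeftIntegral h ∧ W.IsRightIntegral h ∧ W.swSId h = 1 ∧ W.swIdS h = 1 ∧ W.S h = h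

/-- The canonical left action of a functional `λ ∈ A*` on `A`:
`λ ⇀ a = Σ a₍₁₎ · ⟨λ, a₍₂₎⟩`. -/
def lact (W : WeakHopfAlgebra A) (lam : A →ₗ[ℂ] ℂ) : A →ₗ[ℂ] A :=
  (TensorProduct.rid ℂ A).toLinearMap ∘ₗ
    (TensorProduct.map (LinearMap.id : A →ₗ[ℂ] A) lam) ∘ₗ W.Δ

/-- `λ ∈ A*` is a left integral of the dual weak Hopf algebra:
`λ ⇀ a ∈ A_L` for all `a ∈ A`. -/
def IsDualLeftIntegral (W : WeakHopfAlgebra A) (lam : A →ₗ[ℂ] ℂ) : Prop :=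
  ∀ a : A, W.lact lam a ∈ W.AL

/-- A dual pair of left integrals `(l, λ)`. -/
def IsDualPair (W : WeakHopfAlgebra A) (l : A) (lam : A →ₗ[ℂ] ℂ) : Prop :=
  W.IsLeftIntegral l ∧ W.IsDualLeftIntegral lam ∧
  W.lact lam l = 1 ∧
  (∀ a : A,
    (TensorProduct.rid ℂ A)
      ((TensorProduct.map (LinearMap.id : A →ₗ[ℂ] A) (lam ∘ₗ LinearMap.mulLeft ℂ a)) (W.Δ l))
      = W.S a) ∧
  (∀ a : A,
    (TensorProduct.lid ℂ A)
      ((TensorProduct.map (lam ∘ₗ LinearMap.mulRight ℂ a ∘ₗ W.Sinv)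
        (LinearMap.id : A →ₗ[ℂ] A)) (W.Δ l)) = a)

end WeakHopfAlgebra

/-- A (left) module `*`-algebra over a weak `*`-Hopf algebra. -/
structure ModuleAlgebra {A : Type} [Ring A] [Algebra ℂ A] [StarRing A] [StarModule ℂ A]
    (W : WeakHopfAlgebra A) (M : Type) [Ring M] [Algebra ℂ M] [StarRing M] [StarModule ℂ M] where
  act : A →ₗ[ℂ] M →ₗ[ℂ] M
  act_mul : ∀ (a b : A) (m : M), act (a * b) m = act a (act b m)
  act_one : ∀ m : M, act 1 m = m
  act_mul' : ∀ (a : A) (m n : M),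
    act a (m * n) = LinearMap.mul' ℂ M ((TensorProduct.map (act.flip m) (act.flip n)) (W.Δ a))
  act_star : ∀ (a : A) (m : M), star (act a m) = act (star (W.S a)) (star m)
  act_unit : ∀ a : A, act a 1 = act (W.swIdS a) 1

namespace ModuleAlgebra

variable {A : Type} [Ring A] [Algebra ℂ A] [StarRing A] [StarModule ℂ A]
variable {M : Type} [Ring M] [Algebra ℂ M] [StarRing M] [StarModule ℂ M]
variable {W : WeakHopfAlgebra A}

/-- `M_R = A ▷ 1_M`. -/
def MR (MA : ModuleAlgebra W M) : Set M := Set.range fun a : A => MA.act a 1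

/-- The fixed point algebra `M^A`. -/
def fixed (MA : ModuleAlgebra W M) : Set M :=
  {n | ∀ (a : A) (m : M), MA.act a (m * n) = MA.act a m * n}

end ModuleAlgebra

section Crossed

variable {A : Type} [Ring A] [Algebra ℂ A] [StarRing A] [StarModule ℂ A]
variable {M : Type} [Ring M] [Algebra ℂ M] [StarRing M] [StarModule ℂ M]
variable {W : WeakHopfAlgebra A}

/-- The subspace of `M ⊗ A` by which one divides to form the crossed product
`M ⋊ A = M ⊗_{A_L} A`. -/
def crossedRel (MA : ModuleAlgebra W M) : Submodule ℂ (M ⊗[ℂ] A) :=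
  Submodule.span ℂ
    {x | ∃ (m : M) (a b : A), b ∈ W.AL ∧
      x = (m * MA.act b 1) ⊗ₜ[ℂ] a - m ⊗ₜ[ℂ] (b * a)}

/-- The crossed product `M ⋊ A` as a vector space. -/
abbrev Crossed (MA : ModuleAlgebra W M) : Type := (M ⊗[ℂ] A) ⧸ crossedRel MA

/-- The canonical projection `M ⊗ A → M ⋊ A`; `cmk MA (m ⊗ₜ a)` is `m ⋊ a`. -/
def cmk (MA : ModuleAlgebra W M) : M ⊗[ℂ] A →ₗ[ℂ] Crossed MA := (crossedRel MA).mkQ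

/-- The embedding `M → M ⋊ A`, `m ↦ m ⋊ 1`. -/
def iM (MA : ModuleAlgebra W M) : M →ₗ[ℂ] Crossed MA :=
  cmk MA ∘ₗ (TensorProduct.mk ℂ M A).flip (1 : A)

/-- The map `A → M ⋊ A`, `a ↦ 1 ⋊ a`. -/
def iA (MA : ModuleAlgebra W M) : A →ₗ[ℂ] Crossed MA :=
  cmk MA ∘ₗ (TensorProduct.mk ℂ M A) (1 : M)

/-- The unit `1 ⋊ 1` of `M ⋊ A`. -/
def oneC (MA : ModuleAlgebra W M) : Crossed MA := cmk MA ((1 : M) ⊗ₜ[ℂ] (1 : A))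

/-- The multiplication of the crossed product `M ⋊ A`
(whose existence is the content of Theorem 3.1), as a bundled bilinear map
together with its defining formula on generators:
`(m ⋊ a)(m' ⋊ a') = Σ m (a₍₁₎ ▷ m') ⋊ a₍₂₎ a'`. -/
structure CrossedMul (MA : ModuleAlgebra W M) where
  mul : Crossed MA →ₗ[ℂ] Crossed MA →ₗ[ℂ] Crossed MA
  mul_def : ∀ (m m' : M) (a a' : A),
    mul (cmk MA (m ⊗ₜ[ℂ] a)) (cmk MA (m' ⊗ₜ[ℂ] a'))
      = cmk MA ((TensorProduct.map ((LinearMap.mulLeft ℂ m) ∘ₗ (MA.act.flip m'))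
          (LinearMap.mulRight ℂ a')) (W.Δ a))

/-- The star operation of the crossed product `M ⋊ A`
(whose existence is part of Theorem 3.1):
`(m ⋊ a)* = Σ (a₍₁₎* ▷ m*) ⋊ a₍₂₎*`. -/
structure CrossedStar (MA : ModuleAlgebra W M) where
  st : Crossed MA →+ Crossed MA
  st_smul : ∀ (c : ℂ) (x : Crossed MA), st (c • x) = (starRingEnd ℂ c) • st x
  st_def : ∀ (m : M) (a : A),
    st (cmk MA (m ⊗ₜ[ℂ] a))
      = cmk MA ((TensorProduct.map (MA.act.flip (star m)) (LinearMap.id : A →ₗ[ℂ] A))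
          (W.Δ (star a)))

/-- The multiplication on `(M ⋊ A) ⊗ B` induced by a crossed product
multiplication on `M ⋊ A` and the algebra structure of `B`. -/
def mulT (MA : ModuleAlgebra W M) (CS : CrossedMul MA) (B : Type) [Ring B] [Algebra ℂ B] :
    Crossed MA ⊗[ℂ] B →ₗ[ℂ] Crossed MA ⊗[ℂ] B →ₗ[ℂ] Crossed MA ⊗[ℂ] B :=
  TensorProduct.lift
    ((TensorProduct.mapBilinear (RingHom.id ℂ) (Crossed MA) B (Crossed MA) B).compl₁₂ CS.mul
      (LinearMap.mul ℂ B))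

end Crossed

/-!
The elements `a ▷ 1` commute with the fixed-point algebra `N`: one has `a ▷ 1 = y ▷ 1` for
`y = S⁻¹(a₍₁₎ S(a₍₂₎)) ∈ A_R`, and for `y ∈ A_R` and `n ∈ N` both `n (y ▷ 1)` and `(y ▷ 1) n` equal
`y ▷ n`. Hence `(n ⋊ 1)(m ⋊ a) = nm ⋊ a` and `(m ⋊ a)(n ⋊ 1) = mn ⋊ a`, so for every `ω ∈ A*` the
map `E_ω : m ⋊ a ↦ m ((ω ⇀ a) ▷ 1)` sends the centralizer of `N ⋊ 1` into `N' ∩ M`. For a basis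
`(bᵢ)` of `A` with dual basis `(βᵢ)` every `y ∈ M ⋊ A` equals `Σᵢ E_{βᵢ}(y) ⋊ bᵢ`, which gives (ii).
Part (iii) follows from (ii), from `(b ▷ 1) ⋊ a = 1 ⋊ b₍₁₎ S(b₍₂₎) a` and from `E_ε(x ⋊ 1) = x`.
-/

open TensorProduct

namespace TensorProduct

variable {R M N ι : Type*} [CommRing R] [AddCommGroup M] [Module R M] [AddCommGroup N]
  [Module R N] [Fintype ι]

theorem sum_basis_tmul_lid_rTensor_coord (B : Module.Basis ι R M) (t : M ⊗[R] N) :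
    ∑ i, B i ⊗ₜ[R] TensorProduct.lid R N (LinearMap.rTensor N (B.coord i) t) = t := by
  induction t using TensorProduct.induction_on with
  | zero => simp
  | tmul m n =>
    simp only [LinearMap.rTensor_tmul, lid_tmul, Module.Basis.coord_apply, ← smul_tmul,
      ← sum_tmul, B.sum_repr]
  | add x y hx hy => simp only [map_add, tmul_add, Finset.sum_add_distrib, hx, hy]

theorem sum_rid_lTensor_coord_tmul_basis (B : Module.Basis ι R N) (t : M ⊗[R] N) :
    ∑ i, TensorProduct.rid R M (LinearMap.lTensor M (B.coord i) t) ⊗ₜ[R] B i = t := by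
  induction t using TensorProduct.induction_on with
  | zero => simp
  | tmul m n =>
    simp only [LinearMap.lTensor_tmul, rid_tmul, Module.Basis.coord_apply, smul_tmul,
      ← tmul_sum, B.sum_repr]
  | add x y hx hy => simp only [map_add, add_tmul, Finset.sum_add_distrib, hx, hy]

end TensorProduct

namespace WeakHopfAlgebra

variable {A : Type} [Ring A] [Algebra ℂ A] [StarRing A] [StarModule ℂ A] (W : WeakHopfAlgebra A)

theorem S_one : W.S 1 = 1 := by
  have h := W.S_antimul (W.Sinv 1) 1
  rw [mul_one, W.S_Sinv, mul_one] at h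
  exact h.symm

theorem swIdS_mem_AL (x : A) : W.swIdS x ∈ W.AL :=
  ⟨W.ε ∘ₗ LinearMap.mulRight ℂ x, W.antipode_right x⟩

theorem swIdS_one : W.swIdS 1 = 1 := by
  have h := W.antipode_right 1
  rw [show W.ε ∘ₗ LinearMap.mulRight ℂ (1 : A) = W.ε by ext; simp, W.counit_left] at h
  exact h

theorem exists_comul_one_eq_sum_tmul_right_mem_AL :
    ∃ (n : ℕ) (u v : Fin n → A), (∀ i, v i ∈ W.AL) ∧ W.Δ 1 = ∑ i, u i ⊗ₜ[ℂ] v i := by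
  have := W.finite
  let B := Module.finBasis ℂ A
  exact ⟨_, B, _, fun i => ⟨B.coord i, rfl⟩, (sum_basis_tmul_lid_rTensor_coord B (W.Δ 1)).symm⟩

variable {n : ℕ} {u v : Fin n → A}

theorem map_comul_id_comul_one (h1 : W.Δ 1 = ∑ i, u i ⊗ₜ[ℂ] v i) :
    map W.Δ LinearMap.id (W.Δ 1) = ∑ i, ∑ j, (u i ⊗ₜ[ℂ] (v i * u j)) ⊗ₜ[ℂ] v j := by
  rw [← W.unit_weak, h1, sum_tmul, tmul_sum, map_sum, Finset.sum_mul_sum]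
  simp [Algebra.TensorProduct.tmul_mul_tmul]

theorem map_comul_id_comul_one' (h1 : W.Δ 1 = ∑ i, u i ⊗ₜ[ℂ] v i) :
    map W.Δ LinearMap.id (W.Δ 1) = ∑ i, ∑ j, (u j ⊗ₜ[ℂ] (u i * v j)) ⊗ₜ[ℂ] v i := by
  rw [← W.unit_weak', h1, sum_tmul, tmul_sum, map_sum, Finset.sum_mul_sum]
  simp [Algebra.TensorProduct.tmul_mul_tmul]

theorem map_id_comul_comul_one (h1 : W.Δ 1 = ∑ i, u i ⊗ₜ[ℂ] v i) :
    map LinearMap.id W.Δ (W.Δ 1) = ∑ i, ∑ j, u i ⊗ₜ[ℂ] ((v i * u j) ⊗ₜ[ℂ] v j) := by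
  rw [← W.coassoc, W.map_comul_id_comul_one h1]
  simp

theorem map_id_comul_comul_one' (h1 : W.Δ 1 = ∑ i, u i ⊗ₜ[ℂ] v i) :
    map LinearMap.id W.Δ (W.Δ 1) = ∑ i, ∑ j, u j ⊗ₜ[ℂ] ((u i * v j) ⊗ₜ[ℂ] v i) := by
  rw [← W.coassoc, W.map_comul_id_comul_one' h1]
  simp

theorem comul_of_mem_AL {z : A} (hz : z ∈ W.AL) : W.Δ z = (z ⊗ₜ[ℂ] 1) * W.Δ 1 := by
  obtain ⟨φ, rfl⟩ := hz
  obtain ⟨n, u, v, h1⟩ := exists_sum_tmul_eq (W.Δ 1)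
  have h := congrArg (TensorProduct.lid ℂ _ ∘ map φ LinearMap.id) (W.map_id_comul_comul_one h1)
  simp only [h1, Function.comp_apply, map_sum, map_tmul, LinearMap.id_coe, id_eq, lid_tmul] at h ⊢
  simp only [h, map_smul, sum_tmul, Finset.sum_mul, Finset.mul_sum, smul_tmul', smul_mul_assoc,
    Algebra.TensorProduct.tmul_mul_tmul, one_mul]
  rw [Finset.sum_comm]

theorem comul_of_mem_AL' {z : A} (hz : z ∈ W.AL) : W.Δ z = W.Δ 1 * (z ⊗ₜ[ℂ] 1) := by
  obtain ⟨φ, rfl⟩ := hz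
  obtain ⟨n, u, v, h1⟩ := exists_sum_tmul_eq (W.Δ 1)
  have h := congrArg (TensorProduct.lid ℂ _ ∘ map φ LinearMap.id) (W.map_id_comul_comul_one' h1)
  simp only [h1, Function.comp_apply, map_sum, map_tmul, LinearMap.id_coe, id_eq, lid_tmul] at h ⊢
  simp only [h, map_smul, sum_tmul, Finset.mul_sum, Finset.sum_mul, smul_tmul', mul_smul_comm,
    Algebra.TensorProduct.tmul_mul_tmul, mul_one]
  rw [Finset.sum_comm]

theorem comul_of_mem_AR {y : A} (hy : y ∈ W.AR) : W.Δ y = W.Δ 1 * (1 ⊗ₜ[ℂ] y) := by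
  obtain ⟨φ, rfl⟩ := hy
  obtain ⟨n, u, v, h1⟩ := exists_sum_tmul_eq (W.Δ 1)
  have h := congrArg (TensorProduct.rid ℂ _ ∘ map LinearMap.id φ) (W.map_comul_id_comul_one h1)
  simp only [h1, Function.comp_apply, map_sum, map_tmul, LinearMap.id_coe, id_eq, rid_tmul] at h ⊢
  simp only [h, map_smul, tmul_sum, Finset.mul_sum, Finset.sum_mul, tmul_smul, smul_tmul',
    mul_smul_comm, Algebra.TensorProduct.tmul_mul_tmul, mul_one]
  rw [Finset.sum_comm]

theorem comul_of_mem_AR' {y : A} (hy : y ∈ W.AR) : W.Δ y = (1 ⊗ₜ[ℂ] y) * W.Δ 1 := by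
  obtain ⟨φ, rfl⟩ := hy
  obtain ⟨n, u, v, h1⟩ := exists_sum_tmul_eq (W.Δ 1)
  have h := congrArg (TensorProduct.rid ℂ _ ∘ map LinearMap.id φ) (W.map_comul_id_comul_one' h1)
  simp only [h1, Function.comp_apply, map_sum, map_tmul, LinearMap.id_coe, id_eq, rid_tmul] at h ⊢
  simp only [h, map_smul, tmul_sum, Finset.mul_sum, Finset.sum_mul, tmul_smul, smul_tmul',
    smul_mul_assoc, Algebra.TensorProduct.tmul_mul_tmul, one_mul]
  rw [Finset.sum_comm]

theorem Sinv_mem_AR {z : A} (hz : z ∈ W.AL) : W.Sinv z ∈ W.AR := by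
  obtain ⟨φ, rfl⟩ := hz
  refine ⟨φ ∘ₗ W.S, ?_⟩
  obtain ⟨n, u, v, h1⟩ := exists_sum_tmul_eq (W.Δ 1)
  have hS := W.S_anticomul 1
  rw [W.S_one] at hS
  conv_lhs => rw [hS]
  rw [h1]
  simp [W.Sinv_S]

theorem swIdS_of_mem_AR {y : A} (hy : y ∈ W.AR) : W.swIdS y = W.S y := by
  obtain ⟨n, u, v, h1⟩ := exists_sum_tmul_eq (W.Δ 1)
  have h := W.swIdS_one
  simp only [swIdS, h1, map_sum, map_tmul, LinearMap.mul'_apply, LinearMap.id_coe, id_eq] at h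
  simp only [swIdS, W.comul_of_mem_AR' hy, h1, Finset.mul_sum, Algebra.TensorProduct.tmul_mul_tmul,
    one_mul, map_sum, map_tmul, LinearMap.mul'_apply, LinearMap.id_coe, id_eq, W.S_antimul,
    ← mul_assoc, ← Finset.sum_mul, h]

theorem comul_mul_of_mem_AL {z : A} (hz : z ∈ W.AL) (a : A) :
    W.Δ (z * a) = (z ⊗ₜ[ℂ] 1) * W.Δ a := by
  rw [W.Δ_mul, W.comul_of_mem_AL hz, mul_assoc, ← W.Δ_mul, one_mul]

theorem lact_mul_of_mem_AL {z : A} (hz : z ∈ W.AL) (ω : A →ₗ[ℂ] ℂ) (a : A) :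
    W.lact ω (z * a) = z * W.lact ω a := by
  obtain ⟨n, p, q, ha⟩ := exists_sum_tmul_eq (W.Δ a)
  simp [lact, W.comul_mul_of_mem_AL hz, ha, Finset.mul_sum, Algebra.TensorProduct.tmul_mul_tmul]

theorem sum_swIdS_mul {ι : Type} [Fintype ι] {p q : ι → A} {a : A}
    (ha : W.Δ a = ∑ k, p k ⊗ₜ[ℂ] q k) : ∑ k, W.swIdS (p k) * q k = a := by
  obtain ⟨n, u, v, h1⟩ := exists_sum_tmul_eq (W.Δ 1)
  have hsw (x : A) : W.swIdS x = ∑ i, W.ε (u i * x) • v i := by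
    rw [swIdS, W.antipode_right, h1]
    simp
  calc ∑ k, W.swIdS (p k) * q k
      = TensorProduct.lid ℂ A (map W.ε LinearMap.id (W.Δ (1 * a))) := by
        rw [W.Δ_mul, h1, ha, Finset.sum_mul_sum]
        simp only [hsw, Finset.sum_mul, smul_mul_assoc, Algebra.TensorProduct.tmul_mul_tmul,
          map_sum, map_tmul, LinearMap.id_coe, id_eq, lid_tmul]
        rw [Finset.sum_comm]
    _ = a := by rw [one_mul, W.counit_left]

end WeakHopfAlgebra

namespace ModuleAlgebra

variable {A : Type} [Ring A] [Algebra ℂ A] [StarRing A] [StarModule ℂ A]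
variable {M : Type} [Ring M] [Algebra ℂ M] [StarRing M] [StarModule ℂ M]
variable {W : WeakHopfAlgebra A} (MA : ModuleAlgebra W M)

def relativeCommutant : Set M := {x | ∀ n ∈ MA.fixed, x * n = n * x}

theorem act_mul_eq_sum {ι : Type} [Fintype ι] {p q : ι → A} {a : A}
    (ha : W.Δ a = ∑ k, p k ⊗ₜ[ℂ] q k) (x y : M) :
    MA.act a (x * y) = ∑ k, MA.act (p k) x * MA.act (q k) y := by
  simp [MA.act_mul', ha]

theorem act_of_mem_AL {z : A} (hz : z ∈ W.AL) (m : M) : MA.act z m = MA.act z 1 * m := by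
  obtain ⟨n, u, v, h1⟩ := exists_sum_tmul_eq (W.Δ 1)
  have hz' : W.Δ z = ∑ i, (u i * z) ⊗ₜ[ℂ] v i := by
    simp [W.comul_of_mem_AL' hz, h1, Finset.sum_mul, Algebra.TensorProduct.tmul_mul_tmul]
  calc MA.act z m = MA.act z (1 * m) := by rw [one_mul]
    _ = MA.act 1 (MA.act z 1 * m) := by
        simp only [MA.act_mul_eq_sum hz', MA.act_mul_eq_sum h1, MA.act_mul]
    _ = MA.act z 1 * m := MA.act_one _

theorem act_of_mem_AR {y : A} (hy : y ∈ W.AR) (m : M) : MA.act y m = m * MA.act y 1 := by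
  obtain ⟨n, u, v, h1⟩ := exists_sum_tmul_eq (W.Δ 1)
  have hy' : W.Δ y = ∑ i, u i ⊗ₜ[ℂ] (v i * y) := by
    simp [W.comul_of_mem_AR hy, h1, Finset.sum_mul, Algebra.TensorProduct.tmul_mul_tmul]
  calc MA.act y m = MA.act y (m * 1) := by rw [mul_one]
    _ = MA.act 1 (m * MA.act y 1) := by
        simp only [MA.act_mul_eq_sum hy', MA.act_mul_eq_sum h1, MA.act_mul]
    _ = m * MA.act y 1 := MA.act_one _

theorem act_one_eq_act_Sinv_swIdS (a : A) : MA.act a 1 = MA.act (W.Sinv (W.swIdS a)) 1 := by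
  rw [MA.act_unit a, MA.act_unit (W.Sinv _),
    W.swIdS_of_mem_AR (W.Sinv_mem_AR (W.swIdS_mem_AL a)), W.S_Sinv]

theorem act_of_mem_fixed {n : M} (hn : n ∈ MA.fixed) (b : A) : MA.act b n = MA.act b 1 * n := by
  simpa using hn b 1

theorem commute_act_one_of_mem_fixed {n : M} (hn : n ∈ MA.fixed) (a : A) :
    Commute n (MA.act a 1) := by
  have hy := W.Sinv_mem_AR (W.swIdS_mem_AL a)
  rw [Commute, SemiconjBy, MA.act_one_eq_act_Sinv_swIdS, ← MA.act_of_mem_AR hy,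
    MA.act_of_mem_fixed hn]

theorem act_mul_of_mem_fixed {n : M} (hn : n ∈ MA.fixed) (a : A) (m : M) :
    MA.act a (n * m) = n * MA.act a m := by
  obtain ⟨k, p, q, ha⟩ := exists_sum_tmul_eq (W.Δ a)
  have hc (b : A) : n * MA.act b 1 = MA.act b 1 * n := (MA.commute_act_one_of_mem_fixed hn b).eq
  calc MA.act a (n * m) = n * ∑ i, MA.act (p i) 1 * MA.act (q i) m := by
        simp only [MA.act_mul_eq_sum ha, MA.act_of_mem_fixed hn, Finset.mul_sum, ← mul_assoc, hc]
    _ = n * MA.act a m := by rw [← MA.act_mul_eq_sum ha, one_mul]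

theorem act_mem_relativeCommutant {x : M} (hx : x ∈ MA.relativeCommutant) (a : A) :
    MA.act a x ∈ MA.relativeCommutant := fun n hn => by
  rw [← hn a x, hx n hn, MA.act_mul_of_mem_fixed hn]

end ModuleAlgebra

section CrossedProduct

variable {A : Type} [Ring A] [Algebra ℂ A] [StarRing A] [StarModule ℂ A]
variable {M : Type} [Ring M] [Algebra ℂ M] [StarRing M] [StarModule ℂ M]
variable {W : WeakHopfAlgebra A} (MA : ModuleAlgebra W M)

theorem Crossed.linearMap_ext {N : Type} [AddCommGroup N] [Module ℂ N]
    {f g : Crossed MA →ₗ[ℂ] N} (h : ∀ m a, f (cmk MA (m ⊗ₜ[ℂ] a)) = g (cmk MA (m ⊗ₜ[ℂ] a))) :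
    f = g :=
  Submodule.linearMap_qext _ (TensorProduct.ext' h)

theorem iM_apply (n : M) : iM MA n = cmk MA (n ⊗ₜ[ℂ] 1) := rfl

theorem cmk_mul_act_one_tmul {b : A} (hb : b ∈ W.AL) (m : M) (a : A) :
    cmk MA ((m * MA.act b 1) ⊗ₜ[ℂ] a) = cmk MA (m ⊗ₜ[ℂ] (b * a)) :=
  (Submodule.Quotient.eq _).mpr (Submodule.subset_span ⟨m, a, b, hb, rfl⟩)

theorem cmk_act_one_tmul (b a : A) : cmk MA (MA.act b 1 ⊗ₜ[ℂ] a) = iA MA (W.swIdS b * a) := by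
  rw [MA.act_unit, ← one_mul (MA.act _ 1), cmk_mul_act_one_tmul MA (W.swIdS_mem_AL b)]
  rfl

theorem sum_cmk_mul_act_one_tmul {ι : Type} [Fintype ι] {p q : ι → A} {a : A}
    (ha : W.Δ a = ∑ i, p i ⊗ₜ[ℂ] q i) (m : M) :
    ∑ i, cmk MA ((m * MA.act (p i) 1) ⊗ₜ[ℂ] q i) = cmk MA (m ⊗ₜ[ℂ] a) := by
  calc ∑ i, cmk MA ((m * MA.act (p i) 1) ⊗ₜ[ℂ] q i)
      = ∑ i, cmk MA (m ⊗ₜ[ℂ] (W.swIdS (p i) * q i)) := by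
        refine Finset.sum_congr rfl fun i _ => ?_
        rw [MA.act_unit, cmk_mul_act_one_tmul MA (W.swIdS_mem_AL _)]
    _ = cmk MA (m ⊗ₜ[ℂ] a) := by rw [← map_sum, ← tmul_sum, W.sum_swIdS_mul ha]

def crossedCoeff (ω : A →ₗ[ℂ] ℂ) : Crossed MA →ₗ[ℂ] M :=
  (crossedRel MA).liftQ
    (LinearMap.mul' ℂ M ∘ₗ LinearMap.lTensor M (MA.act.flip 1 ∘ₗ W.lact ω)) <| by
    rw [crossedRel, Submodule.span_le]
    rintro _ ⟨m, a, b, hb, rfl⟩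
    simp [W.lact_mul_of_mem_AL hb, MA.act_mul, MA.act_of_mem_AL hb (MA.act _ 1), mul_assoc]

theorem crossedCoeff_cmk_tmul (ω : A →ₗ[ℂ] ℂ) (m : M) (a : A) :
    crossedCoeff MA ω (cmk MA (m ⊗ₜ[ℂ] a)) = m * MA.act (W.lact ω a) 1 := by
  simp [crossedCoeff, cmk]

theorem crossedCoeff_counit_cmk_tmul (m : M) (a : A) :
    crossedCoeff MA W.ε (cmk MA (m ⊗ₜ[ℂ] a)) = m * MA.act a 1 := by
  rw [crossedCoeff_cmk_tmul, show W.lact W.ε a = a from W.counit_right a]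

theorem eq_sum_cmk_crossedCoeff_tmul {ι : Type} [Fintype ι] (B : Module.Basis ι ℂ A)
    (y : Crossed MA) : y = ∑ i, cmk MA (crossedCoeff MA (B.coord i) y ⊗ₜ[ℂ] B i) := by
  have key : LinearMap.id =
      ∑ i, cmk MA ∘ₗ (TensorProduct.mk ℂ M A).flip (B i) ∘ₗ crossedCoeff MA (B.coord i) :=
    Crossed.linearMap_ext MA fun m a => by
      simp only [LinearMap.id_apply, LinearMap.sum_apply, LinearMap.comp_apply,
        LinearMap.flip_apply, TensorProduct.mk_apply, crossedCoeff_cmk_tmul]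
      exact (sum_cmk_mul_act_one_tmul MA (sum_rid_lTensor_coord_tmul_basis B (W.Δ a)).symm m).symm
  simpa using LinearMap.congr_fun key y

end CrossedProduct

namespace CrossedMul

variable {A : Type} [Ring A] [Algebra ℂ A] [StarRing A] [StarModule ℂ A]
variable {M : Type} [Ring M] [Algebra ℂ M] [StarRing M] [StarModule ℂ M]
variable {W : WeakHopfAlgebra A} {MA : ModuleAlgebra W M} (CS : CrossedMul MA)

def centralizer : Submodule ℂ (Crossed MA) where
  carrier := {y | ∀ n ∈ MA.fixed, CS.mul y (iM MA n) = CS.mul (iM MA n) y}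
  add_mem' hy hz n hn := by simp only [map_add, LinearMap.add_apply, hy n hn, hz n hn]
  zero_mem' n hn := by simp
  smul_mem' c y hy n hn := by simp only [map_smul, LinearMap.smul_apply, hy n hn]

theorem iM_mul_cmk (n m : M) (a : A) :
    CS.mul (iM MA n) (cmk MA (m ⊗ₜ[ℂ] a)) = cmk MA ((n * m) ⊗ₜ[ℂ] a) := by
  obtain ⟨k, u, v, hv, h1⟩ := W.exists_comul_one_eq_sum_tmul_right_mem_AL
  calc CS.mul (iM MA n) (cmk MA (m ⊗ₜ[ℂ] a))
      = ∑ i, cmk MA ((n * MA.act (u i) m * MA.act (v i) 1) ⊗ₜ[ℂ] a) := by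
        simp [iM_apply, CS.mul_def, h1, cmk_mul_act_one_tmul MA (hv _)]
    _ = cmk MA ((n * m) ⊗ₜ[ℂ] a) := by
        simp only [mul_assoc, ← Finset.mul_sum, ← map_sum, ← sum_tmul, ← MA.act_mul_eq_sum h1,
          MA.act_one, mul_one]

theorem cmk_mul_iM_of_mem_fixed {n : M} (hn : n ∈ MA.fixed) (m : M) (a : A) :
    CS.mul (cmk MA (m ⊗ₜ[ℂ] a)) (iM MA n) = cmk MA ((m * n) ⊗ₜ[ℂ] a) := by
  obtain ⟨k, p, q, ha⟩ := exists_sum_tmul_eq (W.Δ a)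
  have hc (b : A) : MA.act b 1 * n = n * MA.act b 1 :=
    (MA.commute_act_one_of_mem_fixed hn b).eq.symm
  calc CS.mul (cmk MA (m ⊗ₜ[ℂ] a)) (iM MA n)
      = ∑ i, cmk MA ((m * n * MA.act (p i) 1) ⊗ₜ[ℂ] q i) := by
        simp only [iM_apply, CS.mul_def, ha, map_sum, map_tmul, LinearMap.comp_apply,
          LinearMap.mulLeft_apply, LinearMap.flip_apply, LinearMap.mulRight_apply, mul_one,
          MA.act_of_mem_fixed hn, hc, mul_assoc]
    _ = cmk MA ((m * n) ⊗ₜ[ℂ] a) := sum_cmk_mul_act_one_tmul MA ha _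

theorem cmk_tmul_mem_centralizer {x : M} (hx : x ∈ MA.relativeCommutant) (a : A) :
    cmk MA (x ⊗ₜ[ℂ] a) ∈ CS.centralizer := fun n hn => by
  rw [CS.cmk_mul_iM_of_mem_fixed hn, CS.iM_mul_cmk, hx n hn]

theorem crossedCoeff_iM_mul (n : M) (ω : A →ₗ[ℂ] ℂ) (y : Crossed MA) :
    crossedCoeff MA ω (CS.mul (iM MA n) y) = n * crossedCoeff MA ω y := by
  have h : crossedCoeff MA ω ∘ₗ CS.mul (iM MA n) = LinearMap.mulLeft ℂ n ∘ₗ crossedCoeff MA ω :=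
    Crossed.linearMap_ext MA fun m a => by
      simp [CS.iM_mul_cmk, crossedCoeff_cmk_tmul, mul_assoc]
  exact LinearMap.congr_fun h y

theorem crossedCoeff_mul_iM_of_mem_fixed {n : M} (hn : n ∈ MA.fixed) (ω : A →ₗ[ℂ] ℂ)
    (y : Crossed MA) : crossedCoeff MA ω (CS.mul y (iM MA n)) = crossedCoeff MA ω y * n := by
  have h : crossedCoeff MA ω ∘ₗ CS.mul.flip (iM MA n) =
      LinearMap.mulRight ℂ n ∘ₗ crossedCoeff MA ω :=
    Crossed.linearMap_ext MA fun m a => by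
      simp [CS.cmk_mul_iM_of_mem_fixed hn, crossedCoeff_cmk_tmul, mul_assoc,
        (MA.commute_act_one_of_mem_fixed hn _).eq]
  exact LinearMap.congr_fun h y

theorem crossedCoeff_mem_relativeCommutant {y : Crossed MA} (hy : y ∈ CS.centralizer)
    (ω : A →ₗ[ℂ] ℂ) : crossedCoeff MA ω y ∈ MA.relativeCommutant := fun n hn => by
  rw [← CS.crossedCoeff_mul_iM_of_mem_fixed hn, hy n hn, CS.crossedCoeff_iM_mul]

theorem centralizer_eq_span :
    CS.centralizer =
      Submodule.span ℂ {y | ∃ x ∈ MA.relativeCommutant, ∃ a : A, y = cmk MA (x ⊗ₜ[ℂ] a)} := by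
  refine le_antisymm (fun y hy => ?_) (Submodule.span_le.mpr ?_)
  · have := W.finite
    let B := Module.finBasis ℂ A
    rw [eq_sum_cmk_crossedCoeff_tmul MA B y]
    exact Submodule.sum_mem _ fun i _ => Submodule.subset_span
      ⟨_, CS.crossedCoeff_mem_relativeCommutant hy _, _, rfl⟩
  · rintro _ ⟨x, hx, a, rfl⟩
    exact CS.cmk_tmul_mem_centralizer hx a

theorem range_act_one_eq_relativeCommutant_iff :
    Set.range (fun a : A => MA.act a 1) = MA.relativeCommutant ↔
      CS.centralizer = LinearMap.range (iA MA) := by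
  rw [CS.centralizer_eq_span]
  constructor
  · intro h
    refine le_antisymm (Submodule.span_le.mpr ?_) ?_
    · rintro _ ⟨x, hx, a, rfl⟩
      obtain ⟨b, rfl⟩ : x ∈ Set.range (fun a : A => MA.act a 1) := h ▸ hx
      exact ⟨_, (cmk_act_one_tmul MA b a).symm⟩
    · rintro _ ⟨a, rfl⟩
      exact Submodule.subset_span ⟨1, fun n _ => by rw [one_mul, mul_one], a, rfl⟩
  · intro h
    refine Set.Subset.antisymm (Set.range_subset_iff.mpr fun b n hn =>
      (MA.commute_act_one_of_mem_fixed hn b).eq.symm) fun x hx => ?_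
    obtain ⟨a, ha⟩ : cmk MA (x ⊗ₜ[ℂ] 1) ∈ LinearMap.range (iA MA) :=
      h ▸ Submodule.subset_span ⟨x, hx, 1, rfl⟩
    refine ⟨a, ?_⟩
    simpa [iA, crossedCoeff_counit_cmk_tmul, MA.act_one] using congrArg (crossedCoeff MA W.ε) ha

end CrossedMul

theorem relative_commutant_crossed_general
    {A M : Type} [Ring A] [Algebra ℂ A] [StarRing A] [StarModule ℂ A]
    [Ring M] [Algebra ℂ M] [StarRing M] [StarModule ℂ M]
    (W : WeakHopfAlgebra A) (MA : ModuleAlgebra W M) (CS : CrossedMul MA) :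
    (∀ x ∈ {x : M | ∀ n ∈ MA.fixed, x * n = n * x}, ∀ a : A,
      MA.act a x ∈ {x : M | ∀ n ∈ MA.fixed, x * n = n * x})
    ∧ ({y : Crossed MA | ∀ n ∈ MA.fixed, CS.mul y (iM MA n) = CS.mul (iM MA n) y}
        = ↑(Submodule.span ℂ
            {y : Crossed MA | ∃ x : M, (∀ n ∈ MA.fixed, x * n = n * x) ∧
              ∃ a : A, y = cmk MA (x ⊗ₜ[ℂ] a)}))
    ∧ ((Set.range (fun a : A => MA.act a 1) = {x : M | ∀ n ∈ MA.fixed, x * n = n * x})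
        ↔ ({y : Crossed MA | ∀ n ∈ MA.fixed, CS.mul y (iM MA n) = CS.mul (iM MA n) y}
            = {y : Crossed MA | ∃ a : A, y = iA MA a})) := by
  have hrange : {y : Crossed MA | ∃ a : A, y = iA MA a} = LinearMap.range (iA MA) := by
    ext y
    simp [eq_comm]
  refine ⟨fun x hx a => MA.act_mem_relativeCommutant hx a,
    congrArg SetLike.coe CS.centralizer_eq_span, ?_⟩
  rw [hrange]
  exact CS.range_act_one_eq_relativeCommutant_iff.trans SetLike.coe_set_eq.symm

/-- Proposition 3.7 of [NSW]: with `N = M^A` and a normalized dual pair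
`(l, λ)` of left integrals:
(i) the relative commutant `N' ∩ M` is invariant under the `A`-action;
(ii) the centralizer of `N ⋊ 1` in `M ⋊ A` is the span of
`{x ⋊ a : x ∈ N' ∩ M, a ∈ A}`;
(iii) `N' ∩ M = A ▷ 1_M` if and only if the centralizer of `N ⋊ 1` in
`M ⋊ A` equals `1 ⋊ A`. -/
theorem relative_commutant_crossed
    {A M : Type} [Ring A] [Algebra ℂ A] [StarRing A] [StarModule ℂ A]
    [Ring M] [Algebra ℂ M] [StarRing M] [StarModule ℂ M]
    (W : WeakHopfAlgebra A) (MA : ModuleAlgebra W M) (CS : CrossedMul MA)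
    (l : A) (lam : A →ₗ[ℂ] ℂ) (hdp : W.IsDualPair l lam)
    (hnorm : W.lact lam 1 = 1) :
    (∀ x ∈ {x : M | ∀ n ∈ MA.fixed, x * n = n * x}, ∀ a : A,
      MA.act a x ∈ {x : M | ∀ n ∈ MA.fixed, x * n = n * x})
    ∧ ({y : Crossed MA | ∀ n ∈ MA.fixed, CS.mul y (iM MA n) = CS.mul (iM MA n) y}
        = ↑(Submodule.span ℂ
            {y : Crossed MA | ∃ x : M, (∀ n ∈ MA.fixed, x * n = n * x) ∧
              ∃ a : A, y = cmk MA (x ⊗ₜ[ℂ] a)}))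
    ∧ ((Set.range (fun a : A => MA.act a 1) = {x : M | ∀ n ∈ MA.fixed, x * n = n * x})
        ↔ ({y : Crossed MA | ∀ n ∈ MA.fixed, CS.mul y (iM MA n) = CS.mul (iM MA n) y}
            = {y : Crossed MA | ∃ a : A, y = iA MA a})) :=
  relative_commutant_crossed_general W MA CS
end
end

section
/- Let M be an A-module algebra over a weak *-Hopf algebra A, and let λ ∈ A* be a left integral of the dual weak Hopf algebra, i.e. λ⇀a := Σ a₍₁₎·⟨λ, a₍₂₎⟩ lies in A_L for every a ∈ A. Then the map T_λ : A → M defined by T_λ(a) := (λ⇀a)▷1_M is an inner implementer of the action, i.e. T_λ(a)·m = Σ (a₍₁₎▷m)·T_λ(a₍₂₎) for all a ∈ A and m ∈ M. -/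
open scoped TensorProduct

noncomputable section

/-! Every element `b ∈ A_L` acts on `M` as left multiplication by `b ▷ 1`, and `λ ⇀ ·` commutes
with the coproduct in the sense `Δ (λ ⇀ a) = Σ a₍₁₎ ⊗ (λ ⇀ a₍₂₎)`. Hence
`T_λ(a) · m = (λ ⇀ a) ▷ m = Σ (a₍₁₎ ▷ m) · ((λ ⇀ a₍₂₎) ▷ 1)`. -/

namespace WeakHopfAlgebra

variable {A : Type} [Ring A] [Algebra ℂ A] [StarRing A] [StarModule ℂ A]

/-- The weak unit axiom `(id ⊗ Δ) Δ 1 = (1 ⊗ Δ 1)(Δ 1 ⊗ 1)`, sliced by `φ ⊗ id ⊗ id`. -/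
theorem Δ_eq_Δ_one_mul_of_mem_AL (W : WeakHopfAlgebra A) {b : A} (hb : b ∈ W.AL) :
    W.Δ b = W.Δ 1 * (b ⊗ₜ[ℂ] (1 : A)) := by
  obtain ⟨φ, rfl⟩ := hb
  set s : A ⊗[ℂ] (A ⊗[ℂ] A) →ₗ[ℂ] A ⊗[ℂ] A :=
    (TensorProduct.lid ℂ (A ⊗[ℂ] A)).toLinearMap ∘ₗ TensorProduct.map φ LinearMap.id
  have Δ_slice : ∀ t : A ⊗[ℂ] A,
      W.Δ (TensorProduct.lid ℂ A (TensorProduct.map φ LinearMap.id t))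
        = s (TensorProduct.map LinearMap.id W.Δ t) := by
    intro t
    induction t using TensorProduct.induction_on with
    | zero => simp
    | tmul x y => simp [s]
    | add x y hx hy => simp only [map_add, hx, hy]
  have slice_mul : ∀ u w : A ⊗[ℂ] A,
      s (TensorProduct.assoc ℂ A A A
          ((TensorProduct.assoc ℂ A A A).symm ((1 : A) ⊗ₜ[ℂ] u) * (w ⊗ₜ[ℂ] (1 : A))))
        = u * (TensorProduct.lid ℂ A (TensorProduct.map φ LinearMap.id w) ⊗ₜ[ℂ] (1 : A)) := by
    intro u w
    induction u using TensorProduct.induction_on with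
    | zero => simp
    | add u₁ u₂ h₁ h₂ => simp only [TensorProduct.tmul_add, map_add, add_mul, h₁, h₂]
    | tmul x y =>
      induction w using TensorProduct.induction_on with
      | zero => simp
      | add w₁ w₂ h₁ h₂ =>
        simp only [TensorProduct.add_tmul, mul_add, map_add, h₁, h₂]
      | tmul p q =>
        simp [s, TensorProduct.smul_tmul']
  rw [Δ_slice, ← W.coassoc, ← W.unit_weak', slice_mul]

theorem Δ_lact (W : WeakHopfAlgebra A) (lam : A →ₗ[ℂ] ℂ) (a : A) :
    W.Δ (W.lact lam a) = TensorProduct.map LinearMap.id (W.lact lam) (W.Δ a) := by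
  set slice : (A ⊗[ℂ] A) ⊗[ℂ] A →ₗ[ℂ] A ⊗[ℂ] A :=
    (TensorProduct.rid ℂ (A ⊗[ℂ] A)).toLinearMap ∘ₗ TensorProduct.map LinearMap.id lam
  have Δ_comp_slice : W.Δ ∘ₗ (TensorProduct.rid ℂ A).toLinearMap ∘ₗ
      TensorProduct.map LinearMap.id lam = slice ∘ₗ TensorProduct.map W.Δ LinearMap.id := by
    ext x y
    simp [slice]
  have slice_eq : slice = TensorProduct.map LinearMap.id
      ((TensorProduct.rid ℂ A).toLinearMap ∘ₗ TensorProduct.map LinearMap.id lam) ∘ₗ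
        (TensorProduct.assoc ℂ A A A).toLinearMap := by
    ext x y z
    simp [slice]
  calc W.Δ (W.lact lam a) = slice (TensorProduct.map W.Δ LinearMap.id (W.Δ a)) :=
        LinearMap.congr_fun Δ_comp_slice (W.Δ a)
    _ = TensorProduct.map LinearMap.id (W.lact lam) (W.Δ a) := by
      rw [slice_eq, LinearMap.comp_apply, LinearEquiv.coe_coe, W.coassoc,
        ← LinearMap.comp_apply (TensorProduct.map _ _), ← TensorProduct.map_comp]
      rfl

end WeakHopfAlgebra

namespace ModuleAlgebra

variable {A : Type} [Ring A] [Algebra ℂ A] [StarRing A] [StarModule ℂ A]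
variable {M : Type} [Ring M] [Algebra ℂ M] [StarRing M] [StarModule ℂ M]
variable {W : WeakHopfAlgebra A}

theorem act_eq_mul'_map_act (MA : ModuleAlgebra W M) (a : A) (m : M) :
    MA.act a m
      = LinearMap.mul' ℂ M (TensorProduct.map (MA.act.flip m) (MA.act.flip 1) (W.Δ a)) := by
  rw [← MA.act_mul', mul_one]

theorem act_eq_act_one_mul_of_mem_AL (MA : ModuleAlgebra W M) {b : A} (hb : b ∈ W.AL) (m : M) :
    MA.act b m = MA.act b 1 * m := by
  have absorb : ∀ t : A ⊗[ℂ] A,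
      LinearMap.mul' ℂ M
          (TensorProduct.map (MA.act.flip 1) (MA.act.flip m) (t * (b ⊗ₜ[ℂ] (1 : A))))
        = LinearMap.mul' ℂ M
          (TensorProduct.map (MA.act.flip (MA.act b 1)) (MA.act.flip m) t) := by
    intro t
    induction t using TensorProduct.induction_on with
    | zero => simp
    | tmul x y => simp [MA.act_mul]
    | add t₁ t₂ h₁ h₂ => simp only [add_mul, map_add, h₁, h₂]
  calc MA.act b m = MA.act b (1 * m) := by rw [one_mul]
    _ = MA.act 1 (MA.act b 1 * m) := by
      rw [MA.act_mul', W.Δ_eq_Δ_one_mul_of_mem_AL hb, absorb, MA.act_mul']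
    _ = MA.act b 1 * m := MA.act_one _

end ModuleAlgebra

/-- Lemma 4.7 of [NSW]: for a left integral `λ` of the dual weak Hopf
algebra, `T_λ(a) = (λ ⇀ a) ▷ 1_M` is an inner implementer of the action:
`T_λ(a)·m = Σ (a₍₁₎ ▷ m)·T_λ(a₍₂₎)` for all `a ∈ A`, `m ∈ M`. -/
theorem trivial_inner_implementer
    {A M : Type} [Ring A] [Algebra ℂ A] [StarRing A] [StarModule ℂ A]
    [Ring M] [Algebra ℂ M] [StarRing M] [StarModule ℂ M]
    (W : WeakHopfAlgebra A) (MA : ModuleAlgebra W M)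
    (lam : A →ₗ[ℂ] ℂ) (hlam : W.IsDualLeftIntegral lam)
    (a : A) (m : M) :
    MA.act (W.lact lam a) 1 * m
      = LinearMap.mul' ℂ M
          ((TensorProduct.map (MA.act.flip m) ((MA.act.flip 1) ∘ₗ W.lact lam)) (W.Δ a)) := by
  rw [← MA.act_eq_act_one_mul_of_mem_AL (hlam a), MA.act_eq_mul'_map_act, W.Δ_lact,
    ← LinearMap.comp_apply (TensorProduct.map _ _), ← TensorProduct.map_comp, LinearMap.comp_id]
end
end
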